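/- arXiv:1906.11536 — 4 statements merged into one kernel-verified Lean document; each statement's English description precedes it below -/
import Mathlib

section
/- Let (S, 𝒜) be a measurable space, Q a probability measure on S, and f : S × S → ℝ a measurable function such that f is square-integrable with respect to Q ⊗ Q and the diagonal map x ↦ f(x,x) is square-integrable with respect to Q. Let (X_i)_{i≥1} be an i.i.d. sequence of S-valued random variables with common law Q, defined on a probability space (Ω, ℱ, ℙ). Then there exists a constant C ≥ 0 such that for every n ≥ 1, E[ ( (1/n²) Σ_{i=1}^n Σ_{j=1}^n f(X_i, X_j) − ∫∫ f(x,y) dQ(x) dQ(y) )² ] ≤ C / n. In particular, the U-statistic (1/n²) Σ_{i,j≤n} f(X_i,X_j) converges to ∫∫ f dQ⊗Q in L²(ℙ) as n → ∞. -/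
open MeasureTheory ProbabilityTheory Filter Finset

/-! Centering `f` at `m = ∫∫ f dQ dQ` gives `g = f - m` with `∫ g d(Q ⊗ Q) = 0`. Expanding the
square of `∑ᵢⱼ g(Xᵢ, Xⱼ)` gives `n⁴` terms `E[g(Xᵢ, Xⱼ) g(Xₖ, Xₗ)]`. When `{k, l}` is disjoint from
`{i, j}` the two factors are independent, and if one of the pairs is off-diagonal its factor has
mean `∫ g d(Q ⊗ Q) = 0`, so the term vanishes. At most `5 n³` terms survive, each bounded by the
second moments of `g` under `Q ⊗ Q` and on the diagonal, so the mean square error is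
`O(n⁻⁴ · n³) = O(1/n)`. -/

lemma integral_mul_le_of_integral_sq_le {α : Type*} [MeasurableSpace α] {μ : Measure α}
    {u v : α → ℝ} {K : ℝ} (hu : MemLp u 2 μ) (hv : MemLp v 2 μ)
    (hu2 : ∫ x, u x ^ 2 ∂μ ≤ K) (hv2 : ∫ x, v x ^ 2 ∂μ ≤ K) :
    ∫ x, u x * v x ∂μ ≤ K := by
  have hamgm : ∀ x, u x * v x ≤ (u x ^ 2 + v x ^ 2) / 2 := fun x => by
    nlinarith [sq_nonneg (u x - v x)]
  calc ∫ x, u x * v x ∂μ ≤ ∫ x, (u x ^ 2 + v x ^ 2) / 2 ∂μ :=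
        integral_mono (hu.integrable_mul hv) ((hu.integrable_sq.add hv.integrable_sq).div_const 2)
          hamgm
    _ = ((∫ x, u x ^ 2 ∂μ) + ∫ x, v x ^ 2 ∂μ) / 2 := by
        rw [integral_div, integral_add hu.integrable_sq hv.integrable_sq]
    _ ≤ K := by linarith

lemma sum_sum_le_of_eq_zero_of_disjoint {ι : Type*} [DecidableEq ι] (s : Finset ι)
    (c : ι × ι → ι × ι → ℝ) {K : ℝ} (hK : 0 ≤ K) (hle : ∀ p q, c p q ≤ K)
    (hzero : ∀ i j k l, k ≠ i → k ≠ j → l ≠ i → l ≠ j → (i ≠ j ∨ k ≠ l) → c (i, j) (k, l) = 0) :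
    ∑ p ∈ s ×ˢ s, ∑ q ∈ s ×ˢ s, c p q ≤ 5 * #s ^ 3 * K := by
  -- union bound: `overlap` is at least `1` wherever `c` may be nonzero
  let overlap (i j k l : ι) : ℝ :=
    (if k = i then 1 else 0) + (if k = j then 1 else 0) + (if l = i then 1 else 0)
      + (if l = j then 1 else 0) + (if i = j ∧ k = l then 1 else 0)
  have hpoint : ∀ i j k l, c (i, j) (k, l) ≤ K * overlap i j k l := by
    intro i j k l
    by_cases h : k ≠ i ∧ k ≠ j ∧ l ≠ i ∧ l ≠ j ∧ (i ≠ j ∨ k ≠ l)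
    · obtain ⟨hki, hkj, hli, hlj, hd⟩ := h
      rw [hzero i j k l hki hkj hli hlj hd]
      positivity
    · have hone : 1 ≤ overlap i j k l := by
        simp only [overlap]
        split_ifs <;> norm_num
        tauto
      nlinarith [hle (i, j) (k, l)]
  have hcount : ∑ i ∈ s, ∑ j ∈ s, ∑ k ∈ s, ∑ l ∈ s, overlap i j k l
      = 4 * (#s : ℝ) ^ 3 + (#s : ℝ) ^ 2 := by
    simp [overlap, sum_add_distrib, ite_and]
    ring
  calc ∑ p ∈ s ×ˢ s, ∑ q ∈ s ×ˢ s, c p q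
      ≤ ∑ i ∈ s, ∑ j ∈ s, ∑ k ∈ s, ∑ l ∈ s, K * overlap i j k l := by
        simp only [sum_product]
        gcongr with i _ j _ k _ l _
        exact hpoint i j k l
    _ = K * (4 * (#s : ℝ) ^ 3 + (#s : ℝ) ^ 2) := by simp only [← mul_sum, hcount]
    _ ≤ 5 * #s ^ 3 * K := by
        have : (#s : ℝ) ^ 2 ≤ (#s : ℝ) ^ 3 := by
          rcases (#s).eq_zero_or_pos with h | h
          · simp [h]
          · exact pow_le_pow_right₀ (by exact_mod_cast h) (by norm_num)
        nlinarith

lemma integral_sq_sum_eq_sum_sum_integral_mul {α ι : Type*} [MeasurableSpace α] {μ : Measure α}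
    (t : Finset ι) {Y : ι → α → ℝ} (hY : ∀ p, MemLp (Y p) 2 μ) :
    ∫ x, (∑ p ∈ t, Y p x) ^ 2 ∂μ = ∑ p ∈ t, ∑ q ∈ t, ∫ x, Y p x * Y q x ∂μ := by
  have hint : ∀ p q, Integrable (fun x => Y p x * Y q x) μ := fun p q =>
    (hY p).integrable_mul (hY q)
  simp_rw [sq, sum_mul_sum]
  rw [integral_finsetSum _ fun p _ => integrable_finsetSum _ fun q _ => hint p q]
  exact sum_congr rfl fun p _ => integral_finsetSum _ fun q _ => hint p q

lemma aemeasurable_of_map_eq {α β : Type*} [MeasurableSpace α] [MeasurableSpace β] {μ : Measure α}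
    {ν : Measure β} [NeZero ν] {Y : α → β} (h : μ.map Y = ν) : AEMeasurable Y μ :=
  .of_map_ne_zero (h ▸ NeZero.ne ν)

section IIDPairs

variable {S Ω ι : Type*} [MeasurableSpace S] [MeasurableSpace Ω] {Q : Measure S} [NeZero Q]
  {P : Measure Ω} {X : ι → Ω → S}

lemma map_pair_eq_prod [IsFiniteMeasure P] (hindep : iIndepFun X P)
    (hlaw : ∀ i, P.map (X i) = Q) {i j : ι} (hij : i ≠ j) :
    P.map (fun ω => (X i ω, X j ω)) = Q.prod Q := by
  rw [(indepFun_iff_map_prod_eq_prod_map_map (aemeasurable_of_map_eq (hlaw i))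
    (aemeasurable_of_map_eq (hlaw j))).1 (hindep.indepFun hij), hlaw, hlaw]

lemma integral_comp_pair_eq [IsFiniteMeasure P] (hindep : iIndepFun X P)
    (hlaw : ∀ i, P.map (X i) = Q) {φ : S × S → ℝ} (hφ : AEStronglyMeasurable φ (Q.prod Q))
    {i j : ι} (hij : i ≠ j) :
    ∫ ω, φ (X i ω, X j ω) ∂P = ∫ p, φ p ∂(Q.prod Q) := by
  rw [← map_pair_eq_prod hindep hlaw hij] at hφ ⊢
  exact (integral_map ((aemeasurable_of_map_eq (hlaw i)).prodMk
    (aemeasurable_of_map_eq (hlaw j))) hφ).symm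

lemma integral_comp_eq (hlaw : ∀ i, P.map (X i) = Q) {φ : S → ℝ}
    (hφ : AEStronglyMeasurable φ Q) (i : ι) : ∫ ω, φ (X i ω) ∂P = ∫ x, φ x ∂Q := by
  rw [← hlaw i] at hφ ⊢
  exact (integral_map (aemeasurable_of_map_eq (hlaw i)) hφ).symm

variable [IsFiniteMeasure P] {g : S × S → ℝ}

lemma memLp_comp_pair (hindep : iIndepFun X P) (hlaw : ∀ i, P.map (X i) = Q)
    (hg : MemLp g 2 (Q.prod Q)) (hgd : MemLp (fun x => g (x, x)) 2 Q) (i j : ι) :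
    MemLp (fun ω => g (X i ω, X j ω)) 2 P := by
  rcases eq_or_ne i j with rfl | hij
  · rw [← hlaw i] at hgd
    exact hgd.comp_of_map (aemeasurable_of_map_eq (hlaw i))
  · rw [← map_pair_eq_prod hindep hlaw hij] at hg
    exact hg.comp_of_map ((aemeasurable_of_map_eq (hlaw i)).prodMk
      (aemeasurable_of_map_eq (hlaw j)))

lemma integral_sq_comp_pair_le_max (hindep : iIndepFun X P) (hlaw : ∀ i, P.map (X i) = Q)
    (hg : AEStronglyMeasurable g (Q.prod Q)) (hgd : AEStronglyMeasurable (fun x => g (x, x)) Q)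
    (i j : ι) :
    ∫ ω, g (X i ω, X j ω) ^ 2 ∂P ≤ max (∫ p, g p ^ 2 ∂(Q.prod Q)) (∫ x, g (x, x) ^ 2 ∂Q) := by
  rcases eq_or_ne i j with rfl | hij
  · rw [integral_comp_eq hlaw (φ := fun x => g (x, x) ^ 2) (hgd.pow 2) i]
    exact le_max_right _ _
  · rw [integral_comp_pair_eq hindep hlaw (φ := fun p => g p ^ 2) (hg.pow 2) hij]
    exact le_max_left _ _

lemma integral_mul_comp_pair_eq_zero (hindep : iIndepFun X P) (hlaw : ∀ i, P.map (X i) = Q)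
    (hg : Measurable g) (hg0 : ∫ p, g p ∂(Q.prod Q) = 0) {i j k l : ι}
    (hki : k ≠ i) (hkj : k ≠ j) (hli : l ≠ i) (hlj : l ≠ j) (hoffdiag : i ≠ j ∨ k ≠ l) :
    ∫ ω, g (X i ω, X j ω) * g (X k ω, X l ω) ∂P = 0 := by
  have hXae : ∀ i, AEMeasurable (X i) P := fun i => aemeasurable_of_map_eq (hlaw i)
  have hind : IndepFun (fun ω => g (X i ω, X j ω)) (fun ω => g (X k ω, X l ω)) P :=
    (hindep.indepFun_prodMk_prodMk₀ hXae i j k l hki.symm hli.symm hkj.symm hlj.symm).comp hg hg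
  rw [hind.integral_fun_mul_eq_mul_integral
    (hg.comp_aemeasurable ((hXae i).prodMk (hXae j))).aestronglyMeasurable
    (hg.comp_aemeasurable ((hXae k).prodMk (hXae l))).aestronglyMeasurable]
  rcases hoffdiag with hij | hkl
  · rw [integral_comp_pair_eq hindep hlaw hg.aestronglyMeasurable hij, hg0, zero_mul]
  · rw [integral_comp_pair_eq hindep hlaw hg.aestronglyMeasurable hkl, hg0, mul_zero]

lemma integral_sq_sum_comp_pair_le [DecidableEq ι] (hindep : iIndepFun X P)
    (hlaw : ∀ i, P.map (X i) = Q) (hgm : Measurable g) (hg : MemLp g 2 (Q.prod Q))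
    (hgd : MemLp (fun x => g (x, x)) 2 Q) (hg0 : ∫ p, g p ∂(Q.prod Q) = 0) (s : Finset ι) :
    ∫ ω, (∑ i ∈ s, ∑ j ∈ s, g (X i ω, X j ω)) ^ 2 ∂P
      ≤ 5 * #s ^ 3 * max (∫ p, g p ^ 2 ∂(Q.prod Q)) (∫ x, g (x, x) ^ 2 ∂Q) := by
  have hY := memLp_comp_pair hindep hlaw hg hgd
  have hY2 := integral_sq_comp_pair_le_max hindep hlaw hg.1 hgd.1
  simp_rw [← sum_product']
  rw [integral_sq_sum_eq_sum_sum_integral_mul (s ×ˢ s)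
    (Y := fun p ω => g (X p.1 ω, X p.2 ω)) fun p => hY p.1 p.2]
  exact sum_sum_le_of_eq_zero_of_disjoint s _
    (le_max_of_le_left (integral_nonneg fun _ => sq_nonneg _))
    (fun p q => integral_mul_le_of_integral_sq_le (hY _ _) (hY _ _) (hY2 _ _) (hY2 _ _))
    fun i j k l => integral_mul_comp_pair_eq_zero hindep hlaw hgm hg0

lemma integral_sq_inv_sq_mul_sum_sum_le {X : ℕ → Ω → S} (hindep : iIndepFun X P)
    (hlaw : ∀ i, P.map (X i) = Q) (hgm : Measurable g) (hg : MemLp g 2 (Q.prod Q))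
    (hgd : MemLp (fun x => g (x, x)) 2 Q) (hg0 : ∫ p, g p ∂(Q.prod Q) = 0) {n : ℕ} (hn : n ≠ 0) :
    ∫ ω, ((n : ℝ)⁻¹ ^ 2 * ∑ i ∈ range n, ∑ j ∈ range n, g (X i ω, X j ω)) ^ 2 ∂P
      ≤ 5 * max (∫ p, g p ^ 2 ∂(Q.prod Q)) (∫ x, g (x, x) ^ 2 ∂Q) / n := by
  have hsum := integral_sq_sum_comp_pair_le hindep hlaw hgm hg hgd hg0 (range n)
  rw [card_range] at hsum
  set K := max (∫ p, g p ^ 2 ∂(Q.prod Q)) (∫ x, g (x, x) ^ 2 ∂Q)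
  simp_rw [mul_pow]
  rw [integral_const_mul]
  calc _ ≤ ((n : ℝ)⁻¹ ^ 2) ^ 2 * (5 * n ^ 3 * K) := by gcongr
    _ = 5 * K / n := by field_simp

end IIDPairs

lemma inv_sq_mul_sum_sum_sub (a : ℕ → ℕ → ℝ) (m : ℝ) {n : ℕ} (hn : n ≠ 0) :
    (n : ℝ)⁻¹ ^ 2 * ∑ i ∈ range n, ∑ j ∈ range n, a i j - m
      = (n : ℝ)⁻¹ ^ 2 * ∑ i ∈ range n, ∑ j ∈ range n, (a i j - m) := by
  simp only [sum_sub_distrib, sum_const, card_range, nsmul_eq_mul]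
  field_simp

theorem ustatistic_L2_rate_general
    {S : Type*} [MeasurableSpace S] (Q : Measure S) [IsProbabilityMeasure Q]
    (f : S × S → ℝ) (hf : Measurable f)
    (hf2 : MemLp f 2 (Q.prod Q))
    (hdiag : MemLp (fun x => f (x, x)) 2 Q)
    {Ω : Type*} [MeasurableSpace Ω] (Pr : Measure Ω) [IsProbabilityMeasure Pr]
    (X : ℕ → Ω → S)
    (hindep : iIndepFun X Pr)
    (hlaw : ∀ i, Measure.map (X i) Pr = Q) :
    (∃ C : ℝ, 0 ≤ C ∧ ∀ n : ℕ, 1 ≤ n →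
        ∫ ω, ((n : ℝ)⁻¹ ^ 2 *
              ∑ i ∈ Finset.range n, ∑ j ∈ Finset.range n, f (X i ω, X j ω)
            - ∫ x, ∫ y, f (x, y) ∂Q ∂Q) ^ 2 ∂Pr ≤ C / n) ∧
    Tendsto (fun n : ℕ =>
        ∫ ω, ((n : ℝ)⁻¹ ^ 2 *
              ∑ i ∈ Finset.range n, ∑ j ∈ Finset.range n, f (X i ω, X j ω)
            - ∫ x, ∫ y, f (x, y) ∂Q ∂Q) ^ 2 ∂Pr) atTop (nhds 0) := by
  set m := ∫ x, ∫ y, f (x, y) ∂Q ∂Q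
  have hfi := hf2.integrable one_le_two
  have hg0 : ∫ p, f p - m ∂(Q.prod Q) = 0 := by
    simp [integral_sub hfi (integrable_const m), m, integral_prod _ hfi]
  set C := 5 * max (∫ p, (f p - m) ^ 2 ∂(Q.prod Q)) (∫ x, (f (x, x) - m) ^ 2 ∂Q)
  have hbound : ∀ n : ℕ, 1 ≤ n → ∫ ω, ((n : ℝ)⁻¹ ^ 2 *
      ∑ i ∈ range n, ∑ j ∈ range n, f (X i ω, X j ω) - m) ^ 2 ∂Pr ≤ C / n := by
    intro n hn
    have hn0 : n ≠ 0 := by omega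
    simp_rw [inv_sq_mul_sum_sum_sub _ m hn0]
    exact integral_sq_inv_sq_mul_sum_sum_le hindep hlaw (hf.sub measurable_const)
      (hf2.sub (memLp_const m)) (hdiag.sub (memLp_const m)) hg0 hn0
  refine ⟨⟨C, by positivity, hbound⟩, ?_⟩
  exact squeeze_zero' (.of_forall fun n => integral_nonneg fun ω => sq_nonneg _)
    (eventually_atTop.2 ⟨1, hbound⟩) (tendsto_const_div_atTop_nhds_zero_nat C)

/-- For an i.i.d. sequence `X` with law `Q` and a square-integrable
(with square-integrable diagonal) measurable `f : S × S → ℝ`, the variance of the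
normalized double sum `(1/n²) ∑ᵢ∑ⱼ f(Xᵢ, Xⱼ)` around `∫∫ f dQ dQ` is `O(1/n)`;
in particular the U-statistic converges to `∫∫ f dQ dQ` in `L²`. -/
theorem ustatistic_L2_rate
    {S : Type*} [MeasurableSpace S] (Q : Measure S) [IsProbabilityMeasure Q]
    (f : S × S → ℝ) (hf : Measurable f)
    (hf2 : MemLp f 2 (Q.prod Q))
    (hdiag : MemLp (fun x => f (x, x)) 2 Q)
    {Ω : Type*} [MeasurableSpace Ω] (Pr : Measure Ω) [IsProbabilityMeasure Pr]
    (X : ℕ → Ω → S) (hX : ∀ i, Measurable (X i))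
    (hindep : iIndepFun X Pr)
    (hlaw : ∀ i, Measure.map (X i) Pr = Q) :
    (∃ C : ℝ, 0 ≤ C ∧ ∀ n : ℕ, 1 ≤ n →
        ∫ ω, ((n : ℝ)⁻¹ ^ 2 *
              ∑ i ∈ Finset.range n, ∑ j ∈ Finset.range n, f (X i ω, X j ω)
            - ∫ x, ∫ y, f (x, y) ∂Q ∂Q) ^ 2 ∂Pr ≤ C / n) ∧
    Tendsto (fun n : ℕ =>
        ∫ ω, ((n : ℝ)⁻¹ ^ 2 *
              ∑ i ∈ Finset.range n, ∑ j ∈ Finset.range n, f (X i ω, X j ω)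
            - ∫ x, ∫ y, f (x, y) ∂Q ∂Q) ^ 2 ∂Pr) atTop (nhds 0) :=
  ustatistic_L2_rate_general Q f hf hf2 hdiag Pr X hindep hlaw
end

section
/- Let (S, 𝒜) be a measurable space, Q a probability measure on S, and f : S × S → ℝ a measurable function such that f is square-integrable with respect to Q ⊗ Q and x ↦ f(x,x) is square-integrable with respect to Q. Then there exists a sequence (μ_n)_{n≥1} of probability measures on S, where each μ_n is a uniform measure on n (not necessarily distinct) points of S, i.e. μ_n = (1/n) Σ_{i=1}^n δ_{x_i^{(n)}} for some points x_1^{(n)},…,x_n^{(n)} ∈ S, such that ∫∫ f(x,y) dμ_n(x) dμ_n(y) → ∫∫ f(x,y) dQ(x) dQ(y) as n → ∞. -/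
/-!
Draw the points independently from `Q`. The V-statistic `V = ∑ᵢⱼ f (Xᵢ, Xⱼ)` has mean
`n² ∫ f d(Q ⊗ Q) + n (∫ f (x, x) dQ - ∫ f d(Q ⊗ Q))`. Since `f (Xᵢ, Xⱼ)` and `f (Xₖ, Xₗ)` are
independent unless the index pairs meet, at most `4n³` of the `n⁴` covariances in `Var V` are
nonzero, each bounded by the larger of the variances of `f` and of its diagonal. Some sample
therefore has `(V - 𝔼 V)² ≤ Var V = O(n³)`, and `V / n²`, the double integral against the
uniform measure on that sample, tends to `∫∫ f dQ dQ`.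
-/

open MeasureTheory Filter ProbabilityTheory Topology
open scoped ENNReal

section Covariance

variable {Ω : Type*} [MeasurableSpace Ω] {μ : Measure Ω} {X Y : Ω → ℝ}

lemma covariance_le_variance_add_variance_div_two [IsFiniteMeasure μ] (hX : MemLp X 2 μ)
    (hY : MemLp Y 2 μ) : cov[X, Y; μ] ≤ (Var[X; μ] + Var[Y; μ]) / 2 := by
  have hX' : MemLp (fun ω ↦ X ω - μ[X]) 2 μ := hX.sub (memLp_const _)
  have hY' : MemLp (fun ω ↦ Y ω - μ[Y]) 2 μ := hY.sub (memLp_const _)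
  rw [variance_eq_integral hX.aemeasurable, variance_eq_integral hY.aemeasurable,
    ← integral_add hX'.integrable_sq hY'.integrable_sq, ← integral_div, covariance]
  refine integral_mono (hX'.integrable_mul hY')
    ((hX'.integrable_sq.add hY'.integrable_sq).div_const 2) fun ω ↦ ?_
  nlinarith [sq_nonneg (X ω - μ[X] - (Y ω - μ[Y]))]

lemma exists_sq_sub_integral_le_variance [IsProbabilityMeasure μ] (hX : MemLp X 2 μ) :
    ∃ ω, (X ω - μ[X]) ^ 2 ≤ Var[X; μ] := by
  rw [variance_eq_integral hX.aemeasurable]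
  exact exists_le_integral (hX.sub (memLp_const _)).integrable_sq

lemma variance_sum_le_of_covariance_eq_zero {ι : Type*} [Fintype ι] {X : ι → Ω → ℝ}
    [IsFiniteMeasure μ] (hX : ∀ i, MemLp (X i) 2 μ) {B : ℝ} (hB : ∀ i, Var[X i; μ] ≤ B)
    (R : ι → ι → Prop) [DecidableRel R] (hR : ∀ i j, ¬ R i j → cov[X i, X j; μ] = 0) {d : ℕ}
    (hd : ∀ i, (Finset.univ.filter (R i)).card ≤ d) :
    Var[fun ω ↦ ∑ i, X i ω; μ] ≤ Fintype.card ι * d * B := by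
  have hrow : ∀ i, ∑ j, cov[X i, X j; μ] ≤ d * B := fun i ↦ by
    have hB0 : 0 ≤ B := (variance_nonneg _ _).trans (hB i)
    calc ∑ j, cov[X i, X j; μ] = ∑ j ∈ Finset.univ.filter (R i), cov[X i, X j; μ] :=
          (Finset.sum_subset (Finset.filter_subset _ _) fun j _ hj ↦
            hR i j (by simpa using hj)).symm
      _ ≤ ∑ j ∈ Finset.univ.filter (R i), B := Finset.sum_le_sum fun j _ ↦
          (covariance_le_variance_add_variance_div_two (hX i) (hX j)).trans
            (by linarith [hB i, hB j])
      _ ≤ d * B := by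
          rw [Finset.sum_const, nsmul_eq_mul]
          exact mul_le_mul_of_nonneg_right (by exact_mod_cast hd i) hB0
  calc Var[fun ω ↦ ∑ i, X i ω; μ] = ∑ i, ∑ j, cov[X i, X j; μ] := variance_fun_sum hX
    _ ≤ ∑ _i : ι, (d * B : ℝ) := Finset.sum_le_sum fun i _ ↦ hrow i
    _ = Fintype.card ι * d * B := by simp [mul_assoc]

end Covariance

lemma measurePreserving_eval_pair {ι : Type*} [Fintype ι] {Ω : ι → Type*}
    [∀ i, MeasurableSpace (Ω i)] (μ : ∀ i, Measure (Ω i)) [∀ i, IsProbabilityMeasure (μ i)]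
    {i j : ι} (hij : i ≠ j) :
    MeasurePreserving (fun ω : ∀ i, Ω i ↦ (ω i, ω j)) (Measure.pi μ) ((μ i).prod (μ j)) := by
  have hindep : IndepFun (fun ω : ∀ i, Ω i ↦ ω i) (fun ω ↦ ω j) (Measure.pi μ) :=
    (iIndepFun_pi (X := fun _ ↦ id) fun i ↦ aemeasurable_id).indepFun hij
  refine ⟨by fun_prop, ?_⟩
  rw [(indepFun_iff_map_prod_eq_prod_map_map (measurable_pi_apply i).aemeasurable
    (measurable_pi_apply j).aemeasurable).1 hindep,
    (measurePreserving_eval μ i).map_eq, (measurePreserving_eval μ j).map_eq]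

lemma integral_comp_of_measurePreserving {α β : Type*} [MeasurableSpace α] [MeasurableSpace β]
    {μ : Measure α} {ν : Measure β} {φ : α → β} (hφ : MeasurePreserving φ μ ν) {g : β → ℝ}
    (hg : AEStronglyMeasurable g ν) : ∫ x, g (φ x) ∂μ = ∫ y, g y ∂ν := by
  rw [← hφ.map_eq] at hg
  rw [← integral_map hφ.aemeasurable hg, hφ.map_eq]

section VStatistic

variable {S ι : Type*} [MeasurableSpace S] [Fintype ι] (Q : Measure S) [IsProbabilityMeasure Q]
  {f : S × S → ℝ}

lemma integral_comp_eval_pair [DecidableEq ι] (hf : Measurable f) (p : ι × ι) :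
    ∫ ω, f (ω p.1, ω p.2) ∂(Measure.pi fun _ ↦ Q) =
      if p.1 = p.2 then ∫ x, f (x, x) ∂Q else ∫ z, f z ∂(Q.prod Q) := by
  split_ifs with hp
  · have hdiag : Measurable fun x ↦ f (x, x) := by fun_prop
    rw [hp]
    exact integral_comp_of_measurePreserving (measurePreserving_eval (fun _ : ι ↦ Q) p.2)
      hdiag.aestronglyMeasurable
  · exact integral_comp_of_measurePreserving (measurePreserving_eval_pair _ hp)
      hf.aestronglyMeasurable

lemma memLp_comp_eval_pair (hf2 : MemLp f 2 (Q.prod Q)) (hdiag : MemLp (fun x ↦ f (x, x)) 2 Q)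
    (p : ι × ι) : MemLp (fun ω ↦ f (ω p.1, ω p.2)) 2 (Measure.pi fun _ ↦ Q) := by
  by_cases hp : p.1 = p.2
  · simp only [hp]
    exact hdiag.comp_measurePreserving (measurePreserving_eval _ p.2)
  · exact hf2.comp_measurePreserving (measurePreserving_eval_pair _ hp)

lemma variance_comp_eval_pair_le (hf : Measurable f) (p : ι × ι) :
    Var[fun ω ↦ f (ω p.1, ω p.2); Measure.pi fun _ ↦ Q] ≤
      max Var[f; Q.prod Q] Var[fun x ↦ f (x, x); Q] := by
  by_cases hp : p.1 = p.2
  · have hdiag : Measurable fun x ↦ f (x, x) := by fun_prop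
    simp only [hp]
    exact ((measurePreserving_eval (fun _ : ι ↦ Q) p.2).variance_fun_comp
      hdiag.aemeasurable).trans_le (le_max_right _ _)
  · rw [(measurePreserving_eval_pair _ hp).variance_fun_comp hf.aemeasurable]
    exact le_max_left _ _

lemma indepFun_comp_eval_pair (hf : Measurable f) {p q : ι × ι} (h11 : p.1 ≠ q.1)
    (h12 : p.1 ≠ q.2) (h21 : p.2 ≠ q.1) (h22 : p.2 ≠ q.2) :
    IndepFun (fun ω ↦ f (ω p.1, ω p.2)) (fun ω ↦ f (ω q.1, ω q.2)) (Measure.pi fun _ ↦ Q) :=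
  ((iIndepFun_pi (X := fun _ ↦ id) fun _ ↦ aemeasurable_id).indepFun_prodMk_prodMk
    measurable_pi_apply p.1 p.2 q.1 q.2 h11 h12 h21 h22).comp hf hf

lemma card_filter_mem_pair_le [DecidableEq ι] (p : ι × ι) :
    (Finset.univ.filter fun q : ι × ι ↦
      q.1 ∈ ({p.1, p.2} : Finset ι) ∨ q.2 ∈ ({p.1, p.2} : Finset ι)).card ≤
        4 * Fintype.card ι := by
  have hpair : ({p.1, p.2} : Finset ι).card ≤ 2 := Finset.card_le_two
  have hsub : (Finset.univ.filter fun q : ι × ι ↦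
      q.1 ∈ ({p.1, p.2} : Finset ι) ∨ q.2 ∈ ({p.1, p.2} : Finset ι)) =
        {p.1, p.2} ×ˢ Finset.univ ∪ Finset.univ ×ˢ {p.1, p.2} := by
    ext q; simp
  rw [hsub]
  refine (Finset.card_union_le _ _).trans ?_
  rw [Finset.card_product, Finset.card_product, Finset.card_univ]
  nlinarith

lemma variance_sum_comp_eval_pair_le (hf : Measurable f) (hf2 : MemLp f 2 (Q.prod Q))
    (hdiag : MemLp (fun x ↦ f (x, x)) 2 Q) :
    Var[fun ω ↦ ∑ p : ι × ι, f (ω p.1, ω p.2); Measure.pi fun _ ↦ Q] ≤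
      4 * Fintype.card ι ^ 3 * max Var[f; Q.prod Q] Var[fun x ↦ f (x, x); Q] := by
  classical
  refine (variance_sum_le_of_covariance_eq_zero (memLp_comp_eval_pair Q hf2 hdiag)
    (variance_comp_eval_pair_le Q hf) _ (fun p q hpq ↦ ?_) card_filter_mem_pair_le).trans_eq
      ?_
  · simp only [Finset.mem_insert, Finset.mem_singleton, not_or] at hpq
    exact (indepFun_comp_eval_pair Q hf (Ne.symm hpq.1.1) (Ne.symm hpq.2.1) (Ne.symm hpq.1.2)
      (Ne.symm hpq.2.2)).covariance_eq_zero (memLp_comp_eval_pair Q hf2 hdiag p)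
        (memLp_comp_eval_pair Q hf2 hdiag q)
  · simp only [Fintype.card_prod]
    push_cast
    ring

lemma integral_sum_comp_eval_pair (hf : Measurable f) (hf2 : MemLp f 2 (Q.prod Q))
    (hdiag : MemLp (fun x ↦ f (x, x)) 2 Q) :
    ∫ ω, ∑ p : ι × ι, f (ω p.1, ω p.2) ∂(Measure.pi fun _ ↦ Q) =
      Fintype.card ι ^ 2 * ∫ z, f z ∂(Q.prod Q) +
        Fintype.card ι * (∫ x, f (x, x) ∂Q - ∫ z, f z ∂(Q.prod Q)) := by
  classical
  rw [integral_finsetSum _ fun p _ ↦ (memLp_comp_eval_pair Q hf2 hdiag p).integrable one_le_two]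
  simp_rw [integral_comp_eval_pair Q hf, Fintype.sum_prod_type]
  have hrow : ∀ i : ι, ∑ j : ι, (if i = j then ∫ x, f (x, x) ∂Q else ∫ z, f z ∂(Q.prod Q)) =
      ∑ j : ι, (∫ z, f z ∂(Q.prod Q) +
        if i = j then ∫ x, f (x, x) ∂Q - ∫ z, f z ∂(Q.prod Q) else 0) := fun i ↦
    Finset.sum_congr rfl fun j _ ↦ by split_ifs <;> ring
  simp only [hrow, Finset.sum_add_distrib, Finset.sum_ite_eq, Finset.mem_univ, if_true,
    Finset.sum_const, Finset.card_univ, nsmul_eq_mul]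
  ring

lemma exists_sq_sum_sub_le (hf : Measurable f) (hf2 : MemLp f 2 (Q.prod Q))
    (hdiag : MemLp (fun x ↦ f (x, x)) 2 Q) :
    ∃ x : ι → S, (∑ p : ι × ι, f (x p.1, x p.2) - (Fintype.card ι ^ 2 * ∫ z, f z ∂(Q.prod Q) +
        Fintype.card ι * (∫ x, f (x, x) ∂Q - ∫ z, f z ∂(Q.prod Q)))) ^ 2 ≤
      Fintype.card ι ^ 3 * (4 * max Var[f; Q.prod Q] Var[fun x ↦ f (x, x); Q]) := by
  obtain ⟨x, hx⟩ := exists_sq_sub_integral_le_variance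
    (memLp_finsetSum Finset.univ fun p _ ↦ memLp_comp_eval_pair (ι := ι) Q hf2 hdiag p)
  refine ⟨x, ?_⟩
  rw [integral_sum_comp_eval_pair Q hf hf2 hdiag] at hx
  refine hx.trans ((variance_sum_comp_eval_pair_le Q hf hf2 hdiag).trans_eq (by ring))

end VStatistic

section Empirical

variable {S ι : Type*} [MeasurableSpace S] [Fintype ι]

lemma integral_smul_sum_dirac {g : S → ℝ} (hg : Measurable g) (c : ℝ≥0∞) (x : ι → S) :
    ∫ a, g a ∂(c • ∑ i, Measure.dirac (x i)) = c.toReal * ∑ i, g (x i) := by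
  rw [integral_smul_measure, integral_finsetSum_measure fun i _ ↦ ?_, smul_eq_mul]
  · simp_rw [integral_dirac' _ _ hg.stronglyMeasurable]
  · exact integrable_dirac' hg.stronglyMeasurable enorm_lt_top

lemma integral_integral_smul_sum_dirac {f : S × S → ℝ} (hf : Measurable f) (c : ℝ≥0∞)
    (x : ι → S) :
    ∫ a, ∫ b, f (a, b) ∂(c • ∑ i, Measure.dirac (x i)) ∂(c • ∑ i, Measure.dirac (x i)) =
      c.toReal ^ 2 * ∑ p : ι × ι, f (x p.1, x p.2) := by
  have hinner : ∀ a, ∫ b, f (a, b) ∂(c • ∑ i, Measure.dirac (x i)) =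
      c.toReal * ∑ j, f (a, x j) := fun a ↦
    integral_smul_sum_dirac (hf.comp measurable_prodMk_left) c x
  simp_rw [hinner]
  rw [integral_smul_sum_dirac (by fun_prop), Fintype.sum_prod_type, Finset.mul_sum]
  simp_rw [Finset.mul_sum]
  exact Finset.sum_congr rfl fun i _ ↦ Finset.sum_congr rfl fun j _ ↦ by ring

end Empirical

lemma tendsto_div_sq_of_sq_sub_le {s : ℕ → ℝ} {L a C : ℝ}
    (h : ∀ n : ℕ, (s n - (n ^ 2 * L + n * a)) ^ 2 ≤ n ^ 3 * C) :
    Tendsto (fun n : ℕ ↦ s n / n ^ 2) atTop (𝓝 L) := by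
  have hmain : Tendsto (fun n : ℕ ↦ L + a / n) atTop (𝓝 L) := by
    simpa using tendsto_const_nhds.add (tendsto_const_div_atTop_nhds_zero_nat a)
  have hsq : Tendsto (fun n : ℕ ↦ (s n / n ^ 2 - (L + a / n)) ^ 2) atTop (𝓝 0) := by
    refine squeeze_zero' (.of_forall fun n ↦ sq_nonneg _) ?_
      (tendsto_const_div_atTop_nhds_zero_nat C)
    filter_upwards [eventually_gt_atTop 0] with n hn
    have hn' : (0 : ℝ) < n := by exact_mod_cast hn
    calc (s n / n ^ 2 - (L + a / n)) ^ 2 = (s n - (n ^ 2 * L + n * a)) ^ 2 / (n : ℝ) ^ 4 := by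
          field_simp
      _ ≤ n ^ 3 * C / n ^ 4 := by gcongr; exact h n
      _ = C / n := by field_simp
  have hdiff : Tendsto (fun n : ℕ ↦ s n / n ^ 2 - (L + a / n)) atTop (𝓝 0) := by
    rw [tendsto_zero_iff_abs_tendsto_zero]
    simpa [Function.comp_def, Real.sqrt_sq_eq_abs] using hsq.sqrt
  simpa using hdiff.add hmain

/-- Any probability measure `Q` can be approximated, for the purpose of
the double integral of a fixed square-integrable (with square-integrable diagonal)
measurable `f : S × S → ℝ`, by uniform measures `μₙ = (1/n) ∑ᵢ δ_{xᵢ⁽ⁿ⁾}` on `n` points: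
`∫∫ f dμₙ dμₙ → ∫∫ f dQ dQ`. -/
theorem empirical_approximation_double_integral
    {S : Type*} [MeasurableSpace S] (Q : Measure S) [IsProbabilityMeasure Q]
    (f : S × S → ℝ) (hf : Measurable f)
    (hf2 : MemLp f 2 (Q.prod Q))
    (hdiag : MemLp (fun x => f (x, x)) 2 Q) :
    ∃ (μ : ℕ → Measure S) (x : (n : ℕ) → Fin n → S),
      (∀ n : ℕ, μ n = (n : ℝ≥0∞)⁻¹ • ∑ i : Fin n, Measure.dirac (x n i)) ∧
      Tendsto (fun n : ℕ => ∫ a, ∫ b, f (a, b) ∂(μ n) ∂(μ n)) atTop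
        (nhds (∫ a, ∫ b, f (a, b) ∂Q ∂Q)) := by
  choose x hx using fun n ↦ exists_sq_sum_sub_le (ι := Fin n) Q hf hf2 hdiag
  refine ⟨_, x, fun n ↦ rfl, ?_⟩
  simp only [Fintype.card_fin] at hx
  rw [← integral_prod f (hf2.integrable one_le_two)]
  refine (tendsto_div_sq_of_sq_sub_le hx).congr fun n ↦ ?_
  rw [integral_integral_smul_sum_dirac hf, ENNReal.toReal_inv, ENNReal.toReal_natCast, inv_pow,
    inv_mul_eq_div]
end

section
/- Let (S, 𝒜) be a measurable space and f : S × S → ℝ a measurable symmetric function such that for every finitely supported probability measure μ on S one has ∫∫ f dμ⊗μ ≥ 0. Let Q be a probability measure on S such that f is square-integrable with respect to Q ⊗ Q, x ↦ f(x,x) is square-integrable with respect to Q, and ∫∫ f(x,y) dQ(x) dQ(y) = 0. Then for every point x ∈ S such that y ↦ f(x,y) is square-integrable with respect to Q, one has ∫ f(x,y) dQ(y) ≥ 0. -/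
/-!
Averaging the hypothesis with uniform weights over `n` independent samples from a probability
measure `μ` gives `0 ≤ n ∫ f(x, x) dμ + n (n - 1) ∫∫ f dμ⊗μ` for every `n`, so the double
integral of `f` is nonnegative for every probability measure, hence for every finite measure.
For the finite measure `n Q + δₓ` the double integral is, by symmetry,
`n² ∫∫ f dQ⊗Q + 2n ∫ f(x, ·) dQ + f(x, x) = 2n ∫ f(x, ·) dQ + f(x, x)`,
and its nonnegativity for all `n` forces `∫ f(x, ·) dQ ≥ 0`.
-/

open MeasureTheory ProbabilityTheory
open scoped ENNReal NNReal

theorem nonneg_of_forall_natCast_mul_add_nonneg {a b : ℝ} (h : ∀ n : ℕ, 0 ≤ n * a + b) :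
    0 ≤ a := by
  by_contra! ha
  obtain ⟨n, hn⟩ := exists_nat_gt (b / -a)
  rw [div_lt_iff₀ (neg_pos.mpr ha)] at hn
  linarith [h n]

theorem MeasureTheory.MeasurePreserving.integral_comp_of_aestronglyMeasurable {α β E : Type*}
    [MeasurableSpace α] [MeasurableSpace β] [NormedAddCommGroup E] [NormedSpace ℝ E]
    {μ : Measure α} {ν : Measure β} {φ : α → β} (h : MeasurePreserving φ μ ν) {g : β → E}
    (hg : AEStronglyMeasurable g ν) : ∫ x, g (φ x) ∂μ = ∫ y, g y ∂ν := by
  rw [← h.map_eq] at hg ⊢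
  exact (integral_map h.aemeasurable hg).symm

def NonnegOnFinitelySupported {S : Type*} (f : S × S → ℝ) : Prop :=
  ∀ (n : ℕ) (x : Fin n → S) (w : Fin n → ℝ), (∀ i, 0 ≤ w i) → (∑ i, w i = 1) →
    0 ≤ ∑ i, ∑ j, w i * w j * f (x i, x j)

theorem NonnegOnFinitelySupported.sum_sum_nonneg {S : Type*} {f : S × S → ℝ}
    (hf : NonnegOnFinitelySupported f) {n : ℕ} (x : Fin n → S) :
    0 ≤ ∑ i, ∑ j, f (x i, x j) := by
  rcases Nat.eq_zero_or_pos n with rfl | hn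
  · simp
  have hw : ∑ _i : Fin n, (n : ℝ)⁻¹ = 1 := by
    simp [Finset.card_univ, (Nat.cast_pos.mpr hn).ne']
  have h := hf n x (fun _ => (n : ℝ)⁻¹) (fun _ => by positivity) hw
  simp_rw [mul_assoc, ← Finset.mul_sum] at h
  exact nonneg_of_mul_nonneg_right (nonneg_of_mul_nonneg_right h (by positivity)) (by positivity)

theorem measurePreserving_eval_prodMk_eval {ι S : Type*} [Fintype ι] [MeasurableSpace S]
    (μ : Measure S) [IsProbabilityMeasure μ] {i j : ι} (hij : i ≠ j) :
    MeasurePreserving (fun ω : ι → S => (ω i, ω j)) (Measure.pi fun _ => μ) (μ.prod μ) := by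
  have hind : IndepFun (fun ω : ι → S => ω i) (fun ω => ω j) (Measure.pi fun _ => μ) :=
    (iIndepFun_pi (X := fun _ => id) fun _ => aemeasurable_id).indepFun hij
  refine ⟨(measurable_pi_apply i).prodMk (measurable_pi_apply j), ?_⟩
  rw [(indepFun_iff_map_prod_eq_prod_map_map (measurable_pi_apply i).aemeasurable
    (measurable_pi_apply j).aemeasurable).mp hind, (measurePreserving_eval _ i).map_eq,
    (measurePreserving_eval _ j).map_eq]

section

variable {S : Type*} [MeasurableSpace S] {f : S × S → ℝ} {μ : Measure S} [IsProbabilityMeasure μ]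

theorem integrable_comp_eval_prodMk_eval {ι : Type*} [Fintype ι]
    (hint : Integrable f (μ.prod μ)) (hdiag : Integrable (fun x => f (x, x)) μ) (i j : ι) :
    Integrable (fun ω : ι → S => f (ω i, ω j)) (Measure.pi fun _ => μ) := by
  rcases eq_or_ne i j with rfl | hij
  · exact (measurePreserving_eval (fun _ : ι => μ) i).integrable_comp_of_integrable hdiag
  · exact (measurePreserving_eval_prodMk_eval μ hij).integrable_comp_of_integrable hint

theorem integral_comp_eval_prodMk_eval {ι : Type*} [Fintype ι] [DecidableEq ι]
    (hf : Measurable f) (i j : ι) :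
    ∫ ω, f (ω i, ω j) ∂(Measure.pi fun _ => μ) =
      if i = j then ∫ x, f (x, x) ∂μ else ∫ p, f p ∂(μ.prod μ) := by
  split_ifs with hij
  · subst hij
    exact (measurePreserving_eval (fun _ : ι => μ) i).integral_comp_of_aestronglyMeasurable
      (hf.comp (measurable_id.prodMk measurable_id)).aestronglyMeasurable
  · exact (measurePreserving_eval_prodMk_eval μ hij).integral_comp_of_aestronglyMeasurable
      hf.aestronglyMeasurable

theorem integral_sum_sum_comp_eval_pi (hf : Measurable f) (hint : Integrable f (μ.prod μ))
    (hdiag : Integrable (fun x => f (x, x)) μ) (n : ℕ) :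
    ∫ ω, ∑ i, ∑ j, f (ω i, ω j) ∂(Measure.pi fun _ : Fin n => μ) =
      n * ∫ x, f (x, x) ∂μ + n * (n - 1) * ∫ p, f p ∂(μ.prod μ) := by
  have hrow (i : Fin n) : ∑ j, (if i = j then ∫ x, f (x, x) ∂μ else ∫ p, f p ∂(μ.prod μ)) =
      ∫ x, f (x, x) ∂μ + (n - 1) * ∫ p, f p ∂(μ.prod μ) := by
    rw [Finset.sum_ite, Finset.filter_eq, Finset.filter_ne]
    simp [Finset.card_erase_of_mem, Nat.cast_sub (Nat.one_le_of_lt i.isLt)]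
  simp_rw [integral_finsetSum _ fun i _ => integrable_finsetSum _ fun j _ =>
    integrable_comp_eval_prodMk_eval hint hdiag i j, integral_finsetSum _ fun j _ =>
    integrable_comp_eval_prodMk_eval hint hdiag _ j, integral_comp_eval_prodMk_eval hf, hrow]
  simp only [Finset.sum_const, Finset.card_univ, Fintype.card_fin, nsmul_eq_mul]
  ring

theorem NonnegOnFinitelySupported.integral_prod_self_nonneg_of_isProbabilityMeasure
    (hpos : NonnegOnFinitelySupported f) (hf : Measurable f) (hint : Integrable f (μ.prod μ))
    (hdiag : Integrable (fun x => f (x, x)) μ) : 0 ≤ ∫ p, f p ∂(μ.prod μ) := by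
  refine nonneg_of_forall_natCast_mul_add_nonneg (b := ∫ x, f (x, x) ∂μ) fun m => ?_
  have h : 0 ≤ ∫ ω, ∑ i, ∑ j, f (ω i, ω j) ∂(Measure.pi fun _ : Fin (m + 1) => μ) :=
    integral_nonneg fun ω => hpos.sum_sum_nonneg ω
  rw [integral_sum_sum_comp_eval_pi hf hint hdiag] at h
  push_cast at h
  nlinarith

end

section

variable {S : Type*} [MeasurableSpace S] {f : S × S → ℝ}

theorem NonnegOnFinitelySupported.integral_prod_self_nonneg {μ : Measure S} [IsFiniteMeasure μ]
    (hpos : NonnegOnFinitelySupported f) (hf : Measurable f) (hint : Integrable f (μ.prod μ))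
    (hdiag : Integrable (fun x => f (x, x)) μ) : 0 ≤ ∫ p, f p ∂(μ.prod μ) := by
  rcases eq_zero_or_neZero μ with rfl | _
  · simp
  set c := (μ Set.univ)⁻¹
  have hc : c ≠ ∞ := ENNReal.inv_ne_top.mpr (NeZero.ne _)
  have hprod : (c • μ).prod (c • μ) = (c * c) • μ.prod μ := by
    rw [Measure.prod_smul_left, Measure.prod_smul_right, smul_smul]
  have h := hpos.integral_prod_self_nonneg_of_isProbabilityMeasure (μ := c • μ) hf
    (hprod ▸ hint.smul_measure (ENNReal.mul_ne_top hc hc)) (hdiag.smul_measure hc)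
  rw [hprod, integral_smul_measure, smul_eq_mul] at h
  refine nonneg_of_mul_nonneg_right h (ENNReal.toReal_pos ?_ (ENNReal.mul_ne_top hc hc))
  simp [c, measure_ne_top]

variable {Q : Measure S} [SFinite Q] {x : S}

theorem prod_smul_add_dirac_self (c : ℝ≥0) (x : S) :
    (c • Q + Measure.dirac x).prod (c • Q + Measure.dirac x) =
      (c * c) • Q.prod Q + c • (Q.map (·, x) + Q.map (x, ·)) + Measure.dirac (x, x) := by
  rw [Measure.add_prod, Measure.prod_add, Measure.prod_add, Measure.prod_smul_left,
    Measure.prod_smul_left, Measure.prod_smul_right, Measure.prod_smul_right, smul_smul,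
    Measure.prod_dirac, Measure.dirac_prod, Measure.dirac_prod_dirac, smul_add]
  abel

theorem integrable_and_integral_prod_smul_add_dirac_self (c : ℝ≥0) (hf : Measurable f)
    (hint : Integrable f (Q.prod Q)) (hl : Integrable (fun y => f (y, x)) Q)
    (hr : Integrable (fun y => f (x, y)) Q) :
    Integrable f ((c • Q + Measure.dirac x).prod (c • Q + Measure.dirac x)) ∧
    ∫ p, f p ∂((c • Q + Measure.dirac x).prod (c • Q + Measure.dirac x)) =
      c ^ 2 * ∫ p, f p ∂(Q.prod Q) + c * (∫ y, f (y, x) ∂Q + ∫ y, f (x, y) ∂Q) + f (x, x) := by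
  have hl' : Integrable f (Q.map (·, x)) :=
    (integrable_map_measure hf.aestronglyMeasurable (by fun_prop)).mpr hl
  have hr' : Integrable f (Q.map (x, ·)) :=
    (integrable_map_measure hf.aestronglyMeasurable (by fun_prop)).mpr hr
  have hQQ := hint.smul_measure_nnreal (c := c * c)
  have hmixed := (hl'.add_measure hr').smul_measure_nnreal (c := c)
  have hdirac := integrable_dirac' (a := (x, x)) hf.stronglyMeasurable enorm_lt_top
  rw [prod_smul_add_dirac_self]
  refine ⟨(hQQ.add_measure hmixed).add_measure hdirac, ?_⟩
  rw [integral_add_measure (hQQ.add_measure hmixed) hdirac, integral_add_measure hQQ hmixed,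
    integral_smul_nnreal_measure, integral_smul_nnreal_measure, integral_add_measure hl' hr',
    integral_map (by fun_prop) hf.aestronglyMeasurable,
    integral_map (by fun_prop) hf.aestronglyMeasurable,
    integral_dirac' _ _ hf.stronglyMeasurable, NNReal.smul_def, NNReal.smul_def, smul_eq_mul,
    smul_eq_mul, NNReal.coe_mul]
  ring

end

/-- Suppose the measurable symmetric `f : S × S → ℝ` is nonnegative
against every finitely supported probability measure, `f` is square-integrable w.r.t.
`Q ⊗ Q` with square-integrable diagonal, and `∫∫ f dQ dQ = 0`. Then for every `x ∈ S`
with `y ↦ f(x,y)` square-integrable, `∫ f(x,y) dQ(y) ≥ 0`. -/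
theorem section_integral_nonneg_of_double_integral_zero
    {S : Type*} [MeasurableSpace S] (f : S × S → ℝ) (hf : Measurable f)
    (hsymm : ∀ x y, f (x, y) = f (y, x))
    (hpos : ∀ (n : ℕ) (x : Fin n → S) (w : Fin n → ℝ), (∀ i, 0 ≤ w i) → (∑ i, w i = 1) →
      0 ≤ ∑ i, ∑ j, w i * w j * f (x i, x j))
    (Q : Measure S) [IsProbabilityMeasure Q]
    (hf2 : MemLp f 2 (Q.prod Q)) (hdiag : MemLp (fun x => f (x, x)) 2 Q)
    (hzero : ∫ x, ∫ y, f (x, y) ∂Q ∂Q = 0) :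
    ∀ x : S, MemLp (fun y => f (x, y)) 2 Q → 0 ≤ ∫ y, f (x, y) ∂Q := by
  intro x hx
  have hr := hx.integrable one_le_two
  have hswap : (fun y => f (y, x)) = fun y => f (x, y) := funext fun y => hsymm y x
  have hl : Integrable (fun y => f (y, x)) Q := hswap ▸ hr
  have hQQ := hf2.integrable one_le_two
  have hQQ_zero : ∫ p, f p ∂(Q.prod Q) = 0 := (integral_prod f hQQ).trans hzero
  have key (n : ℕ) : 0 ≤ n * (2 * ∫ y, f (x, y) ∂Q) + f (x, x) := by
    obtain ⟨hint, heq⟩ := integrable_and_integral_prod_smul_add_dirac_self n hf hQQ hl hr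
    have h := NonnegOnFinitelySupported.integral_prod_self_nonneg hpos hf hint
      ((hdiag.integrable one_le_two).smul_measure_nnreal.add_measure
        (integrable_dirac' (hf.comp (measurable_id.prodMk measurable_id)).stronglyMeasurable
          enorm_lt_top))
    rw [heq, hQQ_zero, hswap, NNReal.coe_natCast] at h
    linarith
  linarith [nonneg_of_forall_natCast_mul_add_nonneg key]
end

section
/- Let H be a real Hilbert space equipped with its Borel σ-algebra, and let P be a Borel probability measure on H with finite second moment, i.e. ∫ ‖x‖² dP(x) < ∞. Assume that the function (x,y) ↦ ⟨x,y⟩ is measurable with respect to the product σ-algebra on H × H and that ∫∫ ⟨x,y⟩ dP(x) dP(y) = 0. Then for every b ∈ H, ∫ ⟨x,b⟩ dP(x) = 0. -/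
/-!
The map `b ↦ ∫ ⟪x, b⟫ dP(x)` is a continuous linear functional, bounded by `∫ ‖x‖ dP`, so by
the Riesz representation theorem it is `⟪m, ·⟫` for a weak mean `m ∈ H`. Integrating it once
more gives `∫∫ ⟪x, y⟫ dP(x) dP(y) = ∫ ⟪m, y⟫ dP(y) = ⟪m, m⟫`, hence the hypothesis forces
`m = 0`. No Bochner integral of the identity is involved, so `H` need not be separable.
-/

open MeasureTheory InnerProductSpace

theorem integrable_norm_of_integrable_norm_sq {E : Type*} [NormedAddCommGroup E]
    [MeasurableSpace E] [OpensMeasurableSpace E] {ν : Measure E} [IsFiniteMeasure ν]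
    (h : Integrable (fun x : E => ‖x‖ ^ 2) ν) : Integrable (fun x : E => ‖x‖) ν :=
  have hmeas : AEStronglyMeasurable (fun x : E => ‖x‖) ν := continuous_norm.aestronglyMeasurable
  ((memLp_two_iff_integrable_sq_norm hmeas).2 (by simpa using h)).integrable one_le_two

section WeakMean

variable {H : Type*} [NormedAddCommGroup H] [InnerProductSpace ℝ H] [MeasurableSpace H]
  [OpensMeasurableSpace H] {μ : Measure H}

theorem integrable_inner_const_of_integrable_norm
    (hμ : Integrable (fun x : H => ‖x‖) μ) (b : H) : Integrable (fun x : H => ⟪x, b⟫_ℝ) μ :=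
  (hμ.mul_const ‖b‖).mono' (continuous_id.inner continuous_const).aestronglyMeasurable
    (.of_forall fun x => by simpa using abs_real_inner_le_norm x b)

variable (μ) (hμ : Integrable (fun x : H => ‖x‖) μ)

noncomputable def meanFunctional : StrongDual ℝ H :=
  LinearMap.mkContinuous
    { toFun := fun b => ∫ x, ⟪x, b⟫_ℝ ∂μ
      map_add' := fun b c => by
        simp only [inner_add_right]
        exact integral_add (integrable_inner_const_of_integrable_norm hμ b)
          (integrable_inner_const_of_integrable_norm hμ c)
      map_smul' := fun r b => by
        simp only [inner_smul_right, RingHom.id_apply]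
        exact integral_const_mul r _ }
    (∫ x, ‖x‖ ∂μ) fun b => by
      rw [← integral_mul_const]
      exact norm_integral_le_of_norm_le (hμ.mul_const ‖b‖)
        (.of_forall fun x => by simpa using abs_real_inner_le_norm x b)

variable [CompleteSpace H]

noncomputable def weakMean : H :=
  (toDual ℝ H).symm (meanFunctional μ hμ)

theorem inner_weakMean_left (b : H) : ⟪weakMean μ hμ, b⟫_ℝ = ∫ x, ⟪x, b⟫_ℝ ∂μ :=
  toDual_symm_apply

theorem integral_integral_inner_eq_norm_weakMean_sq :
    ∫ y, ∫ x, ⟪x, y⟫_ℝ ∂μ ∂μ = ‖weakMean μ hμ‖ ^ 2 := by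
  calc ∫ y, ∫ x, ⟪x, y⟫_ℝ ∂μ ∂μ = ∫ y, ⟪y, weakMean μ hμ⟫_ℝ ∂μ := by
        simp only [real_inner_comm (weakMean μ hμ), inner_weakMean_left]
    _ = ⟪weakMean μ hμ, weakMean μ hμ⟫_ℝ := (inner_weakMean_left μ hμ _).symm
    _ = ‖weakMean μ hμ‖ ^ 2 := real_inner_self_eq_norm_sq _

end WeakMean

theorem integral_inner_eq_zero_of_exponential_barycenter_general
    {H : Type*} [NormedAddCommGroup H] [InnerProductSpace ℝ H] [CompleteSpace H]
    [MeasurableSpace H] [BorelSpace H]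
    (P : Measure H) [IsProbabilityMeasure P]
    (hmom : Integrable (fun x : H => ‖x‖ ^ 2) P)
    (hzero : ∫ y, ∫ x, (inner ℝ x y : ℝ) ∂P ∂P = 0) :
    ∀ b : H, ∫ x, (inner ℝ x b : ℝ) ∂P = 0 := by
  intro b
  have hP := integrable_norm_of_integrable_norm_sq hmom
  have hmean : weakMean P hP = 0 := by
    rw [integral_integral_inner_eq_norm_weakMean_sq P hP] at hzero
    exact norm_eq_zero.1 (pow_eq_zero_iff two_ne_zero |>.1 hzero)
  rw [← inner_weakMean_left P hP, hmean, inner_zero_left]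

/-- Let `H` be a real Hilbert space with its Borel σ-algebra and `P` a
Borel probability measure with finite second moment such that `(x,y) ↦ ⟪x,y⟫` is
measurable for the product σ-algebra and `∫∫ ⟪x,y⟫ dP(x) dP(y) = 0` (the origin is an
exponential barycenter). Then `∫ ⟪x,b⟫ dP(x) = 0` for every `b ∈ H`. -/
theorem integral_inner_eq_zero_of_exponential_barycenter
    {H : Type*} [NormedAddCommGroup H] [InnerProductSpace ℝ H] [CompleteSpace H]
    [MeasurableSpace H] [BorelSpace H]
    (P : Measure H) [IsProbabilityMeasure P]
    (hmom : Integrable (fun x : H => ‖x‖ ^ 2) P)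
    (hmeas : Measurable fun p : H × H => (inner ℝ p.1 p.2 : ℝ))
    (hzero : ∫ y, ∫ x, (inner ℝ x y : ℝ) ∂P ∂P = 0) :
    ∀ b : H, ∫ x, (inner ℝ x b : ℝ) ∂P = 0 :=
  integral_inner_eq_zero_of_exponential_barycenter_general P hmom hzero
end
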